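/- arXiv:1302.0490 — 2 statements merged into one kernel-verified Lean document; each statement's English description precedes it below -/
import Mathlib

section
/- Under the same setup, with δ = δ_{|I₁|+|I₂|} < 1/2: (1 - (δ/(1-δ))²)‖Φu‖₂² ≤ ‖A_{I₁}u‖₂² ≤ ‖Φu‖₂² for any u with supp(u) ⊆ I₂ and I₁ ∩ I₂ = ∅. -/
open Matrix BigOperators Finset

/-- squared Euclidean norm -/
noncomputable def n2sq {α : Type*} [Fintype α] (v : α → ℝ) : ℝ := ∑ i, (v i)^2

/-- Euclidean norm -/
noncomputable def n2 {α : Type*} [Fintype α] (v : α → ℝ) : ℝ := Real.sqrt (n2sq v)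

/-- sup norm -/
noncomputable def ninf {α : Type*} [Fintype α] (v : α → ℝ) : ℝ := ⨆ i, |v i|

/-- dot product -/
def dot {α : Type*} [Fintype α] (u v : α → ℝ) : ℝ := ∑ i, u i * v i

/-- column submatrix indexed by a finite index set -/
noncomputable def subCols {m n : ℕ} (Φ : Matrix (Fin m) (Fin n) ℝ) (I : Finset (Fin n)) :
    Matrix (Fin m) {j // j ∈ I} ℝ := Matrix.of fun i j => Φ i j.1

/-- restriction of a vector to an index set -/
def restrict {n : ℕ} (x : Fin n → ℝ) (I : Finset (Fin n)) : {j // j ∈ I} → ℝ :=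
  fun j => x j.1

/-- Moore–Penrose pseudoinverse (full column rank case) -/
noncomputable def pinv {m n : ℕ} (Φ : Matrix (Fin m) (Fin n) ℝ) (I : Finset (Fin n)) :
    Matrix {j // j ∈ I} (Fin m) ℝ :=
  ((subCols Φ I)ᵀ * subCols Φ I)⁻¹ * (subCols Φ I)ᵀ

/-- orthogonal projector onto the column span of `Φ_I` -/
noncomputable def proj {m n : ℕ} (Φ : Matrix (Fin m) (Fin n) ℝ) (I : Finset (Fin n)) :
    Matrix (Fin m) (Fin m) ℝ := subCols Φ I * pinv Φ I

/-- projector onto the orthogonal complement of the column span of `Φ_I` -/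
noncomputable def projPerp {m n : ℕ} (Φ : Matrix (Fin m) (Fin n) ℝ) (I : Finset (Fin n)) :
    Matrix (Fin m) (Fin m) ℝ := 1 - proj Φ I

/-- restricted isometry property of order `K` with constant `δ` -/
def RIP {m n : ℕ} (Φ : Matrix (Fin m) (Fin n) ℝ) (K : ℕ) (δ : ℝ) : Prop :=
  ∀ I : Finset (Fin n), I.card ≤ K → ∀ q : {j // j ∈ I} → ℝ,
    (1 - δ) * n2sq q ≤ n2sq ((subCols Φ I).mulVec q) ∧
    n2sq ((subCols Φ I).mulVec q) ≤ (1 + δ) * n2sq q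

section Helpers

variable {α : Type*} [Fintype α]

lemma n2sq_nonneg (v : α → ℝ) : 0 ≤ n2sq v :=
  Finset.sum_nonneg fun _ _ => sq_nonneg _

lemma n2_nonneg (v : α → ℝ) : 0 ≤ n2 v := Real.sqrt_nonneg _

lemma n2_sq (v : α → ℝ) : n2 v ^ 2 = n2sq v := Real.sq_sqrt (n2sq_nonneg v)

lemma dot_comm (u v : α → ℝ) : dot u v = dot v u := by
  simp [dot, mul_comm]

lemma n2sq_eq_dot (v : α → ℝ) : n2sq v = dot v v := by
  simp [n2sq, dot, sq]

lemma n2sq_sub (v w : α → ℝ) : n2sq (v - w) = n2sq v - 2 * dot v w + n2sq w := by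
  simp only [n2sq, dot, Pi.sub_apply, Finset.mul_sum]
  rw [← Finset.sum_sub_distrib, ← Finset.sum_add_distrib]
  exact Finset.sum_congr rfl fun i _ => by ring

lemma n2sq_add (v w : α → ℝ) : n2sq (v + w) = n2sq v + 2 * dot v w + n2sq w := by
  simp only [n2sq, dot, Pi.add_apply, Finset.mul_sum]
  rw [← Finset.sum_add_distrib, ← Finset.sum_add_distrib]
  exact Finset.sum_congr rfl fun i _ => by ring

lemma dot_smul_left (t : ℝ) (v w : α → ℝ) : dot (t • v) w = t * dot v w := by
  simp [dot, Finset.mul_sum, mul_assoc]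

lemma n2sq_smul (t : ℝ) (v : α → ℝ) : n2sq (t • v) = t^2 * n2sq v := by
  simp [n2sq, Finset.mul_sum, mul_pow]

lemma dot_mulVec_left {m : ℕ} (M : Matrix (Fin m) α ℝ) (x : α → ℝ) (y : Fin m → ℝ) :
    dot (M.mulVec x) y = dot x (Mᵀ.mulVec y) := by
  simp only [dot, Matrix.mulVec, dotProduct, Matrix.transpose_apply,
    Finset.sum_mul, Finset.mul_sum]
  rw [Finset.sum_comm]
  exact Finset.sum_congr rfl fun i _ => Finset.sum_congr rfl fun j _ => by ring

end Helpers

section Restrict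

variable {m n : ℕ}

lemma n2sq_restrict (x : Fin n → ℝ) (I : Finset (Fin n)) (hs : ∀ j, x j ≠ 0 → j ∈ I) :
    n2sq (restrict x I) = n2sq x := by
  unfold n2sq _root_.restrict
  rw [Finset.sum_coe_sort I (fun j => (x j)^2)]
  apply Finset.sum_subset (Finset.subset_univ I)
  intro j _ hj
  have : x j = 0 := by by_contra hc; exact hj (hs j hc)
  simp [this]

lemma mulVec_subCols (Φ : Matrix (Fin m) (Fin n) ℝ) (I : Finset (Fin n)) (x : Fin n → ℝ)
    (hs : ∀ j, x j ≠ 0 → j ∈ I) :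
    (subCols Φ I).mulVec (restrict x I) = Φ.mulVec x := by
  funext i
  unfold Matrix.mulVec dotProduct subCols _root_.restrict
  simp only [Matrix.of_apply]
  rw [Finset.sum_coe_sort I (fun j => Φ i j * x j)]
  apply Finset.sum_subset (Finset.subset_univ I)
  intro j _ hj
  have : x j = 0 := by by_contra hc; exact hj (hs j hc)
  simp [this]

/-- extension of a vector on a subtype by zero -/
noncomputable def ext' {n : ℕ} (I : Finset (Fin n)) (a : {j // j ∈ I} → ℝ) : Fin n → ℝ :=
  fun j => if h : j ∈ I then a ⟨j, h⟩ else 0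

lemma restrict_ext' (I : Finset (Fin n)) (a : {j // j ∈ I} → ℝ) :
    restrict (ext' I a) I = a := by
  funext j; simp [_root_.restrict, ext', j.2]

lemma ext'_supp (I : Finset (Fin n)) (a : {j // j ∈ I} → ℝ) :
    ∀ j, ext' I a j ≠ 0 → j ∈ I := by
  intro j hj
  by_contra hc
  exact hj (by simp [ext', hc])

lemma rip' {K : ℕ} {Φ : Matrix (Fin m) (Fin n) ℝ} {δ : ℝ} (h : RIP Φ K δ)
    (I : Finset (Fin n)) (hI : I.card ≤ K)
    (x : Fin n → ℝ) (hs : ∀ j, x j ≠ 0 → j ∈ I) :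
    (1 - δ) * n2sq x ≤ n2sq (Φ.mulVec x) ∧ n2sq (Φ.mulVec x) ≤ (1 + δ) * n2sq x := by
  have := h I hI (restrict x I)
  rwa [mulVec_subCols Φ I x hs, n2sq_restrict x I hs] at this

lemma cross_base {K : ℕ} {Φ : Matrix (Fin m) (Fin n) ℝ} {δ : ℝ} (h : RIP Φ K δ)
    {I₁ I₂ : Finset (Fin n)} (hdisj : Disjoint I₁ I₂) (hK : I₁.card + I₂.card ≤ K)
    (x y : Fin n → ℝ) (hx : ∀ j, x j ≠ 0 → j ∈ I₁) (hy : ∀ j, y j ≠ 0 → j ∈ I₂) :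
    dot (Φ.mulVec x) (Φ.mulVec y) ≤ δ / 2 * (n2sq x + n2sq y) := by
  have hxy : ∀ j, x j * y j = 0 := by
    intro j
    by_cases hx0 : x j = 0
    · simp [hx0]
    · have h1 := hx j hx0
      have : y j = 0 := by
        by_contra hy0
        exact (Finset.disjoint_left.mp hdisj h1) (hy j hy0)
      simp [this]
  have hdot0 : dot x y = 0 := Finset.sum_eq_zero fun j _ => hxy j
  have hsum : ∀ j, (x + y) j ≠ 0 → j ∈ I₁ ∪ I₂ := by
    intro j hj
    by_cases hx0 : x j = 0
    · have : y j ≠ 0 := by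
        intro h0; exact hj (by simp [Pi.add_apply, hx0, h0])
      exact Finset.mem_union_right _ (hy j this)
    · exact Finset.mem_union_left _ (hx j hx0)
  have hsub : ∀ j, (x - y) j ≠ 0 → j ∈ I₁ ∪ I₂ := by
    intro j hj
    by_cases hx0 : x j = 0
    · have : y j ≠ 0 := by
        intro h0; exact hj (by simp [Pi.sub_apply, hx0, h0])
      exact Finset.mem_union_right _ (hy j this)
    · exact Finset.mem_union_left _ (hx j hx0)
  have hcard : (I₁ ∪ I₂).card ≤ K := le_trans (Finset.card_union_le _ _) hK
  have h1 := (rip' h _ hcard (x + y) hsum).2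
  have h2 := (rip' h _ hcard (x - y) hsub).1
  rw [Matrix.mulVec_add, n2sq_add, n2sq_add, hdot0] at h1
  rw [Matrix.mulVec_sub, n2sq_sub, n2sq_sub, hdot0] at h2
  linarith

lemma cross {K : ℕ} {Φ : Matrix (Fin m) (Fin n) ℝ} {δ : ℝ} (h : RIP Φ K δ)
    {I₁ I₂ : Finset (Fin n)} (hdisj : Disjoint I₁ I₂) (hK : I₁.card + I₂.card ≤ K)
    (x y : Fin n → ℝ) (hx : ∀ j, x j ≠ 0 → j ∈ I₁) (hy : ∀ j, y j ≠ 0 → j ∈ I₂) :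
    dot (Φ.mulVec x) (Φ.mulVec y) ≤ δ * n2 x * n2 y := by
  set a := n2 x with ha
  set b := n2 y with hb
  have ha0 : 0 ≤ a := n2_nonneg x
  have hb0 : 0 ≤ b := n2_nonneg y
  have hbx : ∀ j, (b • x) j ≠ 0 → j ∈ I₁ := by
    intro j hj
    apply hx j
    intro h0; exact hj (by simp [Pi.smul_apply, h0])
  have hay : ∀ j, (a • y) j ≠ 0 → j ∈ I₂ := by
    intro j hj
    apply hy j
    intro h0; exact hj (by simp [Pi.smul_apply, h0])
  have hbase := cross_base h hdisj hK (b • x) (a • y) hbx hay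
  rw [Matrix.mulVec_smul, Matrix.mulVec_smul, dot_smul_left, dot_comm, dot_smul_left,
    dot_comm, n2sq_smul, n2sq_smul, ← n2_sq x, ← n2_sq y] at hbase
  -- hbase : b * (a * D) ≤ δ/2 * (b^2 * a^2 + a^2 * b^2)
  rcases eq_or_lt_of_le ha0 with haz | hap
  · have : n2sq x = 0 := by rw [← n2_sq x, ← ha, ← haz]; ring
    have hx0 : x = 0 := by
      funext i
      have := (Finset.sum_eq_zero_iff_of_nonneg (fun i _ => sq_nonneg (x i))).mp this i
        (Finset.mem_univ i)
      exact pow_eq_zero_iff (by norm_num) |>.mp this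
    rw [hx0]
    simp [dot, Matrix.mulVec_zero, ← ha, ← haz]
  rcases eq_or_lt_of_le hb0 with hbz | hbp
  · have : n2sq y = 0 := by rw [← n2_sq y, ← hb, ← hbz]; ring
    have hy0 : y = 0 := by
      funext i
      have := (Finset.sum_eq_zero_iff_of_nonneg (fun i _ => sq_nonneg (y i))).mp this i
        (Finset.mem_univ i)
      exact pow_eq_zero_iff (by norm_num) |>.mp this
    rw [hy0]
    simp [dot, Matrix.mulVec_zero, ← hb, ← hbz]
  nlinarith [mul_pos hap hbp, hbase]

end Restrict

/-- `(1-(δ/(1-δ))²)‖Φu‖₂² ≤ ‖A_{I₁}u‖₂² ≤ ‖Φu‖₂²`. -/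
theorem modified_rip_image {m n : ℕ} (Φ : Matrix (Fin m) (Fin n) ℝ)
    (I₁ I₂ : Finset (Fin n)) (hdisj : Disjoint I₁ I₂)
    (δ : ℝ) (hδ0 : 0 < δ) (hδ : δ < 1/2)
    (hrank : IsUnit ((subCols Φ I₁)ᵀ * subCols Φ I₁))
    (h : RIP Φ (I₁.card + I₂.card) δ)
    (u : Fin n → ℝ) (hsupp : ∀ j, u j ≠ 0 → j ∈ I₂) :
    (1 - (δ/(1-δ))^2) * n2sq (Φ.mulVec u) ≤ n2sq ((projPerp Φ I₁ * Φ).mulVec u) ∧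
    n2sq ((projPerp Φ I₁ * Φ).mulVec u) ≤ n2sq (Φ.mulVec u) := by
  have h1δ : (0:ℝ) < 1 - δ := by linarith
  set A := subCols Φ I₁ with hA
  set v := Φ.mulVec u with hv
  set c := (pinv Φ I₁).mulVec v with hc
  -- the perp projection applied to u
  have hPerp : (projPerp Φ I₁ * Φ).mulVec u = v - A.mulVec c := by
    rw [← Matrix.mulVec_mulVec]
    unfold projPerp
    rw [Matrix.sub_mulVec, Matrix.one_mulVec]
    unfold proj
    rw [← Matrix.mulVec_mulVec, ← hv, ← hc]
  -- P v is in the range of A and self-adjointness gives dot identity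
  have hdet : IsUnit (Aᵀ * A).det := (Matrix.isUnit_iff_isUnit_det _).mp hrank
  have hGinv : (Aᵀ * A) * (Aᵀ * A)⁻¹ = 1 := Matrix.mul_nonsing_inv _ hdet
  have hGc : (Aᵀ * A).mulVec c = Aᵀ.mulVec v := by
    rw [hc]
    show (Aᵀ * A).mulVec (((Aᵀ * A)⁻¹ * Aᵀ).mulVec v) = _
    rw [Matrix.mulVec_mulVec, ← Matrix.mul_assoc, hGinv, Matrix.one_mul]
  have hdotP : dot (A.mulVec c) v = n2sq (A.mulVec c) := by
    have hL : dot (A.mulVec c) v = dot c (Aᵀ.mulVec v) := dot_mulVec_left A c v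
    have hR : n2sq (A.mulVec c) = dot c (Aᵀ.mulVec v) := by
      rw [n2sq_eq_dot, dot_mulVec_left A c (A.mulVec c), Matrix.mulVec_mulVec c Aᵀ A, hGc]
    rw [hL, hR]
  -- rewrite Pv as Φ applied to an extended vector
  have hext : Φ.mulVec (ext' I₁ c) = A.mulVec c := by
    rw [← mulVec_subCols Φ I₁ (ext' I₁ c) (ext'_supp I₁ c), restrict_ext', hA]
  set P2 := n2sq (A.mulVec c) with hP2
  set V2 := n2sq v with hV2
  have hP2nn : 0 ≤ P2 := n2sq_nonneg _
  have hV2nn : 0 ≤ V2 := n2sq_nonneg _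
  have hEq : n2sq (v - A.mulVec c) = V2 - P2 := by
    rw [n2sq_sub, dot_comm, hdotP]; ring
  -- RIP bounds
  have hq : (1 - δ) * n2sq u ≤ V2 :=
    (rip' h I₂ (Nat.le_add_left _ _) u hsupp).1
  have hcb : (1 - δ) * n2sq (ext' I₁ c) ≤ P2 := by
    have := (rip' h I₁ (Nat.le_add_right _ _) (ext' I₁ c) (ext'_supp I₁ c)).1
    rwa [hext] at this
  have hcr : P2 ≤ δ * n2 (ext' I₁ c) * n2 u := by
    have := cross h hdisj (le_refl _) (ext' I₁ c) u (ext'_supp I₁ c) hsupp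
    rwa [hext, ← hv, hdotP] at this
  -- key bound : P2 ≤ (δ/(1-δ))^2 * V2
  have hkey : P2 ≤ (δ/(1-δ))^2 * V2 := by
    have hsq : P2^2 ≤ δ^2 * n2sq (ext' I₁ c) * n2sq u := by
      have h1 : P2^2 ≤ (δ * n2 (ext' I₁ c) * n2 u)^2 := pow_le_pow_left₀ hP2nn hcr 2
      have h2 : (δ * n2 (ext' I₁ c) * n2 u)^2 = δ^2 * n2sq (ext' I₁ c) * n2sq u := by
        rw [mul_pow, mul_pow, n2_sq, n2_sq]
      linarith [h1, h2.le, h2.ge]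
    rcases eq_or_lt_of_le hP2nn with hP0 | hPp
    · rw [← hP0]; exact mul_nonneg (sq_nonneg _) hV2nn
    have hm : ((1-δ) * n2sq (ext' I₁ c)) * ((1-δ) * n2sq u) ≤ P2 * V2 :=
      mul_le_mul hcb hq (mul_nonneg h1δ.le (n2sq_nonneg u)) hP2nn
    have hmain : P2 * (1-δ)^2 ≤ δ^2 * V2 := by
      nlinarith [hsq, hm, hPp, sq_nonneg δ, hV2nn]
    rw [div_pow, div_mul_eq_mul_div, le_div_iff₀ (pow_pos h1δ 2)]
    linarith [hmain]
  constructor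
  · rw [hPerp, hEq]
    nlinarith [hkey, hV2nn]
  · rw [hPerp, hEq]
    linarith [hP2nn]
end

section
/- For any projection of a vector: if P_{I₁} is an orthogonal projector onto span(Φ_{I₁}) and u is supported on I₂ disjoint from I₁, with Φ satisfying RIP of order |I₁|+|I₂| with constant δ < 1/2, then ‖P_{I₁}Φu‖₂ / ‖Φu‖₂ ≤ δ/(1-δ). -/
open Matrix BigOperators Finset

/- ---------- auxiliary lemmas ---------- -/

lemma my_n2sq_nonneg {α : Type*} [Fintype α] (v : α → ℝ) : 0 ≤ n2sq v :=
  Finset.sum_nonneg fun _ _ => sq_nonneg _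

lemma my_n2sq_pos {α : Type*} [Fintype α] {v : α → ℝ} (hv : v ≠ 0) : 0 < n2sq v := by
  obtain ⟨i, hi⟩ : ∃ i, v i ≠ 0 := by
    by_contra hc; push_neg at hc; exact hv (funext hc)
  have h1 : (0:ℝ) < (v i)^2 := by positivity
  exact lt_of_lt_of_le h1
    (Finset.single_le_sum (f := fun i => (v i)^2) (fun j _ => sq_nonneg _) (Finset.mem_univ i))

lemma my_n2sq_eq_dot {α : Type*} [Fintype α] (v : α → ℝ) : n2sq v = dot v v := by
  simp [n2sq, dot, sq]

lemma my_dot_mulVec {ι κ : Type*} [Fintype ι] [Fintype κ] (A : Matrix ι κ ℝ)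
    (w : κ → ℝ) (x : ι → ℝ) : dot (A.mulVec w) x = dot w (Aᵀ.mulVec x) := by
  simp only [dot, Matrix.mulVec, dotProduct, Finset.sum_mul, Finset.mul_sum,
    Matrix.transpose_apply]
  rw [Finset.sum_comm]
  exact Finset.sum_congr rfl fun i _ => Finset.sum_congr rfl fun j _ => by ring

lemma my_dot_proj {m : ℕ} {κ : Type*} [Fintype κ] [DecidableEq κ]
    (A : Matrix (Fin m) κ ℝ) (hr : IsUnit (Aᵀ * A)) (v : Fin m → ℝ) :
    dot (A.mulVec (((Aᵀ * A)⁻¹ * Aᵀ).mulVec v)) (A.mulVec (((Aᵀ * A)⁻¹ * Aᵀ).mulVec v))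
      = dot (A.mulVec (((Aᵀ * A)⁻¹ * Aᵀ).mulVec v)) v := by
  have hATA : (Aᵀ * A) * (Aᵀ * A)⁻¹ = 1 :=
    Matrix.mul_nonsing_inv _ ((Matrix.isUnit_iff_isUnit_det _).mp hr)
  have hAs : Aᵀ * A * ((Aᵀ * A)⁻¹ * Aᵀ) = Aᵀ := by
    rw [← Matrix.mul_assoc, hATA, Matrix.one_mul]
  have key : Aᵀ.mulVec (A.mulVec (((Aᵀ * A)⁻¹ * Aᵀ).mulVec v)) = Aᵀ.mulVec v := by
    rw [Matrix.mulVec_mulVec, Matrix.mulVec_mulVec, hAs]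
  calc dot (A.mulVec (((Aᵀ * A)⁻¹ * Aᵀ).mulVec v)) (A.mulVec (((Aᵀ * A)⁻¹ * Aᵀ).mulVec v))
      = dot (((Aᵀ * A)⁻¹ * Aᵀ).mulVec v) (Aᵀ.mulVec (A.mulVec (((Aᵀ * A)⁻¹ * Aᵀ).mulVec v))) :=
        my_dot_mulVec _ _ _
    _ = dot (((Aᵀ * A)⁻¹ * Aᵀ).mulVec v) (Aᵀ.mulVec v) := by rw [key]
    _ = dot (A.mulVec (((Aᵀ * A)⁻¹ * Aᵀ).mulVec v)) v := (my_dot_mulVec _ _ _).symm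

lemma my_subCols_mulVec_restrict {m n : ℕ} (Φ : Matrix (Fin m) (Fin n) ℝ)
    (I : Finset (Fin n)) (g : Fin n → ℝ) (hg : ∀ j, g j ≠ 0 → j ∈ I) :
    (subCols Φ I).mulVec (_root_.restrict g I) = Φ.mulVec g := by
  funext i
  simp only [Matrix.mulVec, dotProduct, subCols, Matrix.of_apply, _root_.restrict]
  rw [Finset.sum_coe_sort I (fun j => Φ i j * g j)]
  exact Finset.sum_subset I.subset_univ (fun j _ hj => by
    rw [not_imp_comm.mp (hg j) hj, mul_zero])

lemma my_n2sq_restrict {n : ℕ} (I : Finset (Fin n)) (g : Fin n → ℝ)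
    (hg : ∀ j, g j ≠ 0 → j ∈ I) : n2sq (_root_.restrict g I) = n2sq g := by
  simp only [n2sq, _root_.restrict]
  rw [Finset.sum_coe_sort I (fun j => (g j)^2)]
  exact Finset.sum_subset I.subset_univ (fun j _ hj => by
    rw [not_imp_comm.mp (hg j) hj]; ring)

lemma my_rip_full {m n K : ℕ} {δ : ℝ} {Φ : Matrix (Fin m) (Fin n) ℝ} (h : RIP Φ K δ)
    (I : Finset (Fin n)) (hI : I.card ≤ K) (g : Fin n → ℝ) (hg : ∀ j, g j ≠ 0 → j ∈ I) :
    (1 - δ) * n2sq g ≤ n2sq (Φ.mulVec g) ∧ n2sq (Φ.mulVec g) ≤ (1 + δ) * n2sq g := by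
  have := h I hI (_root_.restrict g I)
  rwa [my_subCols_mulVec_restrict Φ I g hg, my_n2sq_restrict I g hg] at this

lemma my_n2sq_comb {α : Type*} [Fintype α] (s t : ℝ) (x y : α → ℝ) :
    n2sq (fun i => s * x i + t * y i)
      = s^2 * n2sq x + 2 * s * t * dot x y + t^2 * n2sq y := by
  simp only [n2sq, dot, Finset.mul_sum]
  rw [← Finset.sum_add_distrib, ← Finset.sum_add_distrib]
  exact Finset.sum_congr rfl fun i _ => by ring

lemma my_mulVec_comb {m n : ℕ} (Φ : Matrix (Fin m) (Fin n) ℝ) (s t : ℝ) (x y : Fin n → ℝ) :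
    Φ.mulVec (fun j => s * x j + t * y j)
      = fun i => s * Φ.mulVec x i + t * Φ.mulVec y i := by
  funext i
  simp only [Matrix.mulVec, dotProduct]
  rw [Finset.mul_sum, Finset.mul_sum, ← Finset.sum_add_distrib]
  exact Finset.sum_congr rfl fun j _ => by ring

lemma my_arith1 {δ sa sb p2 a b : ℝ} (hsa2 : sa^2 = a) (hsb2 : sb^2 = b)
    (hsa : 0 < sa) (hsb : 0 < sb)
    (hcross : 4 * sb * sa * p2 ≤ 2 * δ * (sb^2 * a + sa^2 * b)) : p2 ≤ δ * sa * sb := by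
  subst hsa2 hsb2
  nlinarith [mul_pos hsa hsb, hcross]

lemma my_arith2 {δ sa sb sp sv sd : ℝ} (hδ0 : 0 < δ) (hsp : 0 < sp) (hsd : 0 ≤ sd)
    (hsa : 0 ≤ sa) (hsb : 0 ≤ sb) (hsd2 : sd^2 = 1 - δ)
    (h1 : sd * sa ≤ sp) (h2 : sd * sb ≤ sv)
    (hkey : sp^2 ≤ δ * sa * sb) : sp * (1 - δ) ≤ δ * sv := by
  have h3 : (sd * sa) * (sd * sb) ≤ sp * sv :=
    mul_le_mul h1 h2 (mul_nonneg hsd hsb) hsp.le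
  have h4 : sp^2 * (1 - δ) ≤ δ * (sp * sv) := by nlinarith [hkey, h3, sq_nonneg sd]
  nlinarith [h4, hsp]

/-- `‖P_{I₁}Φu‖₂/‖Φu‖₂ ≤ δ/(1-δ)`. -/
theorem proj_ratio_bound {m n : ℕ} (Φ : Matrix (Fin m) (Fin n) ℝ)
    (I₁ I₂ : Finset (Fin n)) (hdisj : Disjoint I₁ I₂)
    (δ : ℝ) (hδ0 : 0 < δ) (hδ : δ < 1/2)
    (hrank : IsUnit ((subCols Φ I₁)ᵀ * subCols Φ I₁))
    (h : RIP Φ (I₁.card + I₂.card) δ)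
    (u : Fin n → ℝ) (hsupp : ∀ j, u j ≠ 0 → j ∈ I₂)
    (hu : Φ.mulVec u ≠ 0) :
    n2 ((proj Φ I₁).mulVec (Φ.mulVec u)) / n2 (Φ.mulVec u) ≤ δ / (1 - δ) := by
  have hδ1 : (0:ℝ) < 1 - δ := by linarith
  set v := Φ.mulVec u with hv
  set A := subCols Φ I₁ with hA
  set w := (pinv Φ I₁).mulVec v with hw
  set W : Fin n → ℝ := fun j => if hj : j ∈ I₁ then w ⟨j, hj⟩ else 0 with hWdef
  have hW0 : ∀ j, j ∉ I₁ → W j = 0 := fun j hj => dif_neg hj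
  have hWsupp : ∀ j, W j ≠ 0 → j ∈ I₁ := fun j hj => by
    by_contra hc; exact hj (hW0 j hc)
  have hrW : _root_.restrict W I₁ = w := funext fun j => dif_pos j.2
  have heq : Φ.mulVec W = A.mulVec w := by
    rw [← hrW, my_subCols_mulVec_restrict Φ I₁ W hWsupp]
  have hproj : (proj Φ I₁).mulVec v = Φ.mulVec W := by
    rw [heq, proj, ← Matrix.mulVec_mulVec, ← hA, ← hw]
  -- key quantities
  set p2 := n2sq (Φ.mulVec W) with hp2
  set a := n2sq W with ha
  set b := n2sq u with hb
  set V := n2sq v with hV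
  have hVpos : 0 < V := my_n2sq_pos hu
  have hu0 : u ≠ 0 := fun hc => hu (by rw [hv, hc, Matrix.mulVec_zero])
  have hbpos : 0 < b := my_n2sq_pos hu0
  have hp2nn : 0 ≤ p2 := my_n2sq_nonneg _
  have hann : 0 ≤ a := my_n2sq_nonneg _
  -- L3 : p2 = dot (ΦW) v
  have hL3 : p2 = dot (Φ.mulVec W) v := by
    have := my_dot_proj A hrank v
    rw [hp2, my_n2sq_eq_dot, heq, hw]
    exact this
  -- RIP applications
  have hcard1 : I₁.card ≤ I₁.card + I₂.card := Nat.le_add_right _ _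
  have hcard2 : I₂.card ≤ I₁.card + I₂.card := Nat.le_add_left _ _
  have hripW := my_rip_full h I₁ hcard1 W hWsupp
  have hripU := my_rip_full h I₂ hcard2 u hsupp
  have hB1 : (1 - δ) * b ≤ V := hripU.1
  have hA1 : (1 - δ) * a ≤ p2 := hripW.1
  have hA2 : p2 ≤ (1 + δ) * a := hripW.2
  -- main case split
  by_cases hp0 : p2 = 0
  · rw [hproj]
    rw [n2, ← hp2, hp0, Real.sqrt_zero, zero_div]
    positivity
  · have hp2pos : 0 < p2 := lt_of_le_of_ne hp2nn (Ne.symm hp0)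
    have hapos : 0 < a := by nlinarith
    set sa := Real.sqrt a with hsa
    set sb := Real.sqrt b with hsb
    set sp := Real.sqrt p2 with hsp
    set sv := Real.sqrt V with hsv
    have hsa2 : sa ^ 2 = a := Real.sq_sqrt hapos.le
    have hsb2 : sb ^ 2 = b := Real.sq_sqrt hbpos.le
    have hsp2 : sp ^ 2 = p2 := Real.sq_sqrt hp2nn
    have hsv2 : sv ^ 2 = V := Real.sq_sqrt hVpos.le
    have hsapos : 0 < sa := Real.sqrt_pos.mpr hapos
    have hsbpos : 0 < sb := Real.sqrt_pos.mpr hbpos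
    have hsppos : 0 < sp := Real.sqrt_pos.mpr hp2pos
    have hsvpos : 0 < sv := Real.sqrt_pos.mpr hVpos
    -- disjoint supports give dot W u = 0
    have hWu : dot W u = 0 := by
      apply Finset.sum_eq_zero; intro j _
      by_cases hj : j ∈ I₁
      · have : u j = 0 := by
          by_contra hc; exact (Finset.disjoint_left.mp hdisj hj) (hsupp j hc)
        rw [this, mul_zero]
      · rw [hW0 j hj, zero_mul]
    -- cross term bound via RIP on I₁ ∪ I₂
    have hcardU : (I₁ ∪ I₂).card ≤ I₁.card + I₂.card :=
      le_of_eq (Finset.card_union_of_disjoint hdisj)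
    have hsupp1 : ∀ j, (fun j => sb * W j + sa * u j) j ≠ 0 → j ∈ I₁ ∪ I₂ := by
      intro j hj
      by_contra hc
      simp only [Finset.mem_union, not_or] at hc
      apply hj
      have hu0' : u j = 0 := by by_contra hcc; exact hc.2 (hsupp j hcc)
      simp [hW0 j hc.1, hu0']
    have hsupp2 : ∀ j, (fun j => sb * W j + (-sa) * u j) j ≠ 0 → j ∈ I₁ ∪ I₂ := by
      intro j hj
      by_contra hc
      simp only [Finset.mem_union, not_or] at hc
      apply hj
      have hu0' : u j = 0 := by by_contra hcc; exact hc.2 (hsupp j hcc)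
      simp [hW0 j hc.1, hu0']
    have hrip1 := my_rip_full h (I₁ ∪ I₂) hcardU _ hsupp1
    have hrip2 := my_rip_full h (I₁ ∪ I₂) hcardU _ hsupp2
    have him1 : n2sq (Φ.mulVec (fun j => sb * W j + sa * u j))
        = sb^2 * p2 + 2 * sb * sa * p2 + sa^2 * V := by
      rw [my_mulVec_comb, my_n2sq_comb, ← hL3, ← hv, ← hV, hp2]
    have him2 : n2sq (Φ.mulVec (fun j => sb * W j + (-sa) * u j))
        = sb^2 * p2 - 2 * sb * sa * p2 + sa^2 * V := by
      rw [my_mulVec_comb, my_n2sq_comb, ← hL3, ← hv, ← hV, hp2]; ring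
    have hnq1 : n2sq (fun j => sb * W j + sa * u j) = sb^2 * a + sa^2 * b := by
      rw [my_n2sq_comb, hWu, ← ha, ← hb]; ring
    have hnq2 : n2sq (fun j => sb * W j + (-sa) * u j) = sb^2 * a + sa^2 * b := by
      rw [my_n2sq_comb, hWu, ← ha, ← hb]; ring
    have hup : sb^2 * p2 + 2 * sb * sa * p2 + sa^2 * V ≤ (1 + δ) * (sb^2 * a + sa^2 * b) := by
      rw [← him1, ← hnq1]; exact hrip1.2
    have hlo : (1 - δ) * (sb^2 * a + sa^2 * b) ≤ sb^2 * p2 - 2 * sb * sa * p2 + sa^2 * V := by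
      rw [← hnq2, ← him2]; exact hrip2.1
    clear_value p2 a b V sa sb sp sv
    -- 4 sa sb p2 ≤ 4 δ a b
    have hcross : 4 * sb * sa * p2 ≤ 2 * δ * (sb^2 * a + sa^2 * b) := by linarith
    have hkey : p2 ≤ δ * sa * sb := my_arith1 hsa2 hsb2 hsapos hsbpos hcross
    -- sqrt comparisons
    have h1 : Real.sqrt (1 - δ) * sa ≤ sp := by
      rw [hsa, hsp, ← Real.sqrt_mul hδ1.le]
      exact Real.sqrt_le_sqrt hA1
    have h2 : Real.sqrt (1 - δ) * sb ≤ sv := by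
      rw [hsb, hsv, ← Real.sqrt_mul hδ1.le]
      exact Real.sqrt_le_sqrt hB1
    have hsd2 : Real.sqrt (1 - δ) ^ 2 = 1 - δ := Real.sq_sqrt hδ1.le
    have hsdpos : 0 < Real.sqrt (1 - δ) := Real.sqrt_pos.mpr hδ1
    have hfinal : sp * (1 - δ) ≤ δ * sv :=
      my_arith2 hδ0 hsppos (Real.sqrt_nonneg _) hsapos.le hsbpos.le hsd2 h1 h2
        (by rw [hsp2]; exact hkey)
    rw [hproj, n2, n2, ← hp2, ← hV, ← hsp, ← hsv, div_le_div_iff₀ hsvpos hδ1]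
    linarith
end
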